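/- For 1 ≤ i ≤ s let K_i be a simplicial complex of dimension d_i that is nice on [n_i], and set d = (Σ_{i=1}^s d_i) + s − 1, the dimension of the join K_1 * K_2 * … * K_s. If (Σ_{i=1}^s n_i) − s − 2 = 2d, then n_i = 2d_i + 3 and K_i = (Δ_{2d_i+2})^{≤ d_i} for every 1 ≤ i ≤ s, i.e., each K_i consists of all subsets of [n_i] of cardinality at most d_i + 1. -/

import Mathlib

/-!
If every face of a complex `K` that is nice on `V` has at most `k + 1` vertices, then a subset
`F ⊆ V` whose complement has more than `k + 1` vertices must lie in `K`. Applied to a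
`(k + 2)`-subset this gives `|V| ≤ 2k + 3`; summing over the factors of the join, the hypothesis
on `∑ nᵢ` turns all these inequalities into equalities, and when `|V| = 2k + 3` every subset with
at most `k + 1` vertices has a complement with at least `k + 2`, hence is a face.
-/

def IsNiceOn {α : Type*} [DecidableEq α] (K : Finset (Finset α)) (V : Finset α) : Prop :=
  ∀ F ⊆ V, (F ∈ K ↔ V \ F ∉ K)

namespace IsNiceOn

variable {α : Type*} [DecidableEq α] {K : Finset (Finset α)} {V F : Finset α} {k : ℕ}

theorem mem_of_lt_card_sdiff (hK : IsNiceOn K V) (hdim : ∀ G ∈ K, G.card ≤ k + 1)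
    (hF : F ⊆ V) (hcard : k + 1 < (V \ F).card) : F ∈ K :=
  (hK F hF).2 fun hmem => (hdim _ hmem).not_gt hcard

theorem card_le (hK : IsNiceOn K V) (hdim : ∀ G ∈ K, G.card ≤ k + 1) :
    V.card ≤ 2 * k + 3 := by
  by_contra! hV
  obtain ⟨F, hFV, hFcard⟩ := Finset.exists_subset_card_eq (s := V) (n := k + 2) (by omega)
  have hF : F ∈ K :=
    hK.mem_of_lt_card_sdiff hdim hFV (by rw [Finset.card_sdiff_of_subset hFV]; omega)
  have := hdim F hF
  omega

theorem eq_filter_card_le (hK : IsNiceOn K V) (hvert : ∀ G ∈ K, G ⊆ V)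
    (hdim : ∀ G ∈ K, G.card ≤ k + 1) (hV : V.card = 2 * k + 3) :
    K = V.powerset.filter fun F => F.card ≤ k + 1 := by
  ext F
  simp only [Finset.mem_filter, Finset.mem_powerset]
  refine ⟨fun hF => ⟨hvert F hF, hdim F hF⟩, fun ⟨hFV, hFcard⟩ => ?_⟩
  have := Finset.card_le_card hFV
  exact hK.mem_of_lt_card_sdiff hdim hFV (by rw [Finset.card_sdiff_of_subset hFV]; omega)

end IsNiceOn

theorem stmt_13_general (s : ℕ) (K : Fin s → Finset (Finset ℕ))
    (nn dd : Fin s → ℕ) (d : ℕ)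
    (hvert : ∀ i, ∀ F ∈ K i, F ⊆ Finset.Icc 1 (nn i))
    (hnice : ∀ i, ∀ F ⊆ Finset.Icc 1 (nn i), (F ∈ K i ↔ Finset.Icc 1 (nn i) \ F ∉ K i))
    (hdim : ∀ i, ∀ F ∈ K i, F.card ≤ dd i + 1)
    (hd : d + 1 = ∑ i, (dd i + 1))
    (hsum : ∑ i, nn i = 2 * d + s + 2) :
    ∀ i, nn i = 2 * dd i + 3 ∧
      K i = (Finset.Icc 1 (nn i)).powerset.filter fun F => F.card ≤ dd i + 1 := by
  have hle : ∀ i, nn i ≤ 2 * dd i + 3 := fun i => by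
    simpa using IsNiceOn.card_le (hnice i) (hdim i)
  have hsum_eq : ∑ i, nn i = ∑ i, (2 * dd i + 3) := by
    have : ∑ i, (2 * dd i + 3) = 2 * ∑ i, (dd i + 1) + s := by
      simp only [Finset.sum_add_distrib, ← Finset.mul_sum, Finset.sum_const, Finset.card_univ,
        Fintype.card_fin, smul_eq_mul]
      ring
    rw [this, ← hd, hsum]
    ring
  intro i
  have hnn : nn i = 2 * dd i + 3 :=
    (Finset.sum_eq_sum_iff_of_le fun j _ => hle j).1 hsum_eq i (Finset.mem_univ i)
  exact ⟨hnn, IsNiceOn.eq_filter_card_le (hnice i) (hvert i) (hdim i) (by simpa using hnn)⟩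

/-- Let K₁,…,Kₛ be simplicial complexes, Kᵢ of dimension dᵢ and nice on [nᵢ],
and let d = (Σ dᵢ) + s − 1 be the dimension of their join (expressed as
d + 1 = Σ (dᵢ + 1)). If (Σ nᵢ) − s − 2 = 2d, then nᵢ = 2dᵢ + 3 and
Kᵢ = (Δ_{2dᵢ+2})^{≤dᵢ}, the set of all subsets of [nᵢ] of cardinality
at most dᵢ + 1, for every i. -/
theorem stmt_13 (s : ℕ) (hs : 1 ≤ s) (K : Fin s → Finset (Finset ℕ))
    (nn dd : Fin s → ℕ) (d : ℕ)
    (hne : ∀ i, (K i).Nonempty)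
    (hdown : ∀ i, ∀ F ∈ K i, ∀ G ⊆ F, G ∈ K i)
    (hvert : ∀ i, ∀ F ∈ K i, F ⊆ Finset.Icc 1 (nn i))
    (hnice : ∀ i, ∀ F ⊆ Finset.Icc 1 (nn i), (F ∈ K i ↔ Finset.Icc 1 (nn i) \ F ∉ K i))
    (hdim : ∀ i, ∀ F ∈ K i, F.card ≤ dd i + 1)
    (hdim' : ∀ i, ∃ F ∈ K i, F.card = dd i + 1)
    (hd : d + 1 = ∑ i, (dd i + 1))
    (hsum : ∑ i, nn i = 2 * d + s + 2) :
    ∀ i, nn i = 2 * dd i + 3 ∧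
      K i = (Finset.Icc 1 (nn i)).powerset.filter fun F => F.card ≤ dd i + 1 :=
  stmt_13_general s K nn dd d hvert hnice hdim hd hsum
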